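/- The subgroup H = {f_α : α ∈ Sym([n]), α(1) = 1} of Aut(L(n)) has exactly three orbits on the vertices of L(n), namely O_1 = {[1,1i] : 2 ≤ i ≤ n}, O_2 = {[i,1i] : 2 ≤ i ≤ n}, and O_3 = {[i,ij] : i,j ∈ {2,...,n}, i ≠ j}. -/

import Mathlib

set_option linter.unusedVariables false

open SimpleGraph Finset

/-- Vertices of `H(n)`: subsets of `[n]` of size 1 or 2. -/
def HV (n : ℕ) := {s : Finset (Fin n) // s.card = 1 ∨ s.card = 2}

instance (n : ℕ) : DecidableEq (HV n) := Subtype.instDecidableEq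
instance (n : ℕ) : Fintype (HV n) := Subtype.fintype _

/-- The graph `H(n)`: adjacency is strict inclusion. -/
def Hgraph (n : ℕ) : SimpleGraph (HV n) where
  Adj x y := x.1 ⊂ y.1 ∨ y.1 ⊂ x.1
  symm := ⟨fun x y h => h.symm⟩
  loopless := ⟨fun x h => (ssubset_irrefl x.1) (h.elim id id)⟩

instance (n : ℕ) : DecidableRel (Hgraph n).Adj :=
  fun x y => inferInstanceAs (Decidable (_ ∨ _))

noncomputable instance (n : ℕ) : DecidableRel ((Hgraph n).lineGraph).Adj :=
  Classical.decRel _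

def Hv1 {n : ℕ} (i : Fin n) : HV n := ⟨{i}, Or.inl (Finset.card_singleton i)⟩

def Hv2 {n : ℕ} (i j : Fin n) (h : i ≠ j) : HV n := ⟨{i, j}, Or.inr (Finset.card_pair h)⟩

lemma Hadj12 {n : ℕ} (i j : Fin n) (h : i ≠ j) : (Hgraph n).Adj (Hv1 i) (Hv2 i j h) :=
  Or.inl (Finset.ssubset_iff_subset_ne.mpr ⟨by simp [Hv1, Hv2, Finset.singleton_subset_iff], by
    simp only [Hv1, Hv2]
    intro he
    apply h
    have : j ∈ ({i} : Finset (Fin n)) := by rw [he]; simp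
    simpa [eq_comm] using this⟩)

/-- The vertex `[i, ij]` of the line graph `L(n)`, i.e. the edge `{{i},{i,j}}` of `H(n)`. -/
def edgeV {n : ℕ} (i j : Fin n) (h : i ≠ j) : (Hgraph n).edgeSet :=
  ⟨s(Hv1 i, Hv2 i j h), (Hgraph n).mem_edgeSet.mpr (Hadj12 i j h)⟩

def permMap {n : ℕ} (α : Equiv.Perm (Fin n)) (s : HV n) : HV n :=
  ⟨s.1.image α, by rw [Finset.card_image_of_injective _ α.injective]; exact s.2⟩

def permHom {n : ℕ} (α : Equiv.Perm (Fin n)) : Hgraph n →g Hgraph n where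
  toFun := permMap α
  map_rel' := by
    intro x y hxy
    rcases hxy with h | h
    · exact Or.inl ((Finset.image_ssubset_image α.injective).mpr h)
    · exact Or.inr ((Finset.image_ssubset_image α.injective).mpr h)

/-- The map induced by a permutation `α` of `[n]` on the vertices of the line graph `L(n)`. -/
def permEdge {n : ℕ} (α : Equiv.Perm (Fin n)) :
    (Hgraph n).edgeSet → (Hgraph n).edgeSet :=
  (permHom α).mapEdgeSet

/-!
A vertex `[i, ij]` of `L(n)` is the same thing as an ordered pair `(i, j)` of distinct points, and
`f_α` acts on it through `α` coordinatewise. A permutation fixing `x` cannot change which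
coordinate equals `x`, and conversely two pairs of distinct points with the same such pattern
are related by a product of two transpositions fixing `x`. The orbits are therefore the
patterns `(x, ·)`, `(·, x)` and `(·, ·)`; the fourth pattern `(x, x)` is empty.
-/

theorem Equiv.swap_apply_eq_self_of_iff {α : Type*} [DecidableEq α] {a b x : α}
    (h : a = x ↔ b = x) : Equiv.swap a b x = x := by
  by_cases ha : a = x
  · subst ha
    rw [h.mp rfl, Equiv.swap_self, Equiv.refl_apply]
  · exact Equiv.swap_apply_of_ne_of_ne (Ne.symm ha) (Ne.symm (mt h.mpr ha))

theorem Equiv.apply_eq_iff_eq_of_apply_eq {α β : Type*} (f : α ≃ β) {x z : α} {y : β}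
    (hx : f x = y) : f z = y ↔ z = x := by
  rw [← hx, f.apply_eq_iff_eq]

theorem Equiv.Perm.exists_fixing_apply_eq_apply_eq {α : Type*} [DecidableEq α] {x i j i' j' : α}
    (hij : i ≠ j) (hij' : i' ≠ j') (hi : i = x ↔ i' = x) (hj : j = x ↔ j' = x) :
    ∃ σ : Equiv.Perm α, σ x = x ∧ σ i = i' ∧ σ j = j' := by
  set τ := Equiv.swap i i'
  have hτx : τ x = x := Equiv.swap_apply_eq_self_of_iff hi
  have hτi : τ i = i' := Equiv.swap_apply_left i i'
  have hτj : τ j = x ↔ j' = x := (τ.apply_eq_iff_eq_of_apply_eq hτx).trans hj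
  have hτji' : τ j ≠ i' := by rw [← hτi]; exact τ.injective.ne hij.symm
  refine ⟨τ.trans (Equiv.swap (τ j) j'), ?_, ?_, Equiv.swap_apply_left _ _⟩
  · simp only [Equiv.trans_apply, hτx, Equiv.swap_apply_eq_self_of_iff hτj]
  · simp only [Equiv.trans_apply, hτi, Equiv.swap_apply_of_ne_of_ne hτji'.symm hij']

section

variable {n : ℕ}

theorem exists_eq_Hv1_Hv2_of_ssubset {x y : HV n} (h : x.1 ⊂ y.1) :
    ∃ i j hij, x = Hv1 i ∧ y = Hv2 i j hij := by
  have hxy := Finset.card_lt_card h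
  obtain ⟨i, hi⟩ : ∃ i, x.1 = {i} := Finset.card_eq_one.mp <| by
    rcases x.2 with _ | _ <;> rcases y.2 with _ | _ <;> omega
  have hiy : i ∈ y.1 := h.1 (by simp [hi])
  obtain ⟨j, hj⟩ : ∃ j, y.1.erase i = {j} := Finset.card_eq_one.mp <| by
    rw [Finset.card_erase_of_mem hiy]
    rcases x.2 with _ | _ <;> rcases y.2 with _ | _ <;> omega
  have hij : i ≠ j := fun h => by simpa [h] using hj.ge (mem_singleton_self j)
  refine ⟨i, j, hij, Subtype.ext hi, Subtype.ext ?_⟩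
  rw [← Finset.insert_erase hiy, hj]
  rfl

theorem exists_eq_edgeV (e : (Hgraph n).edgeSet) : ∃ i j h, e = edgeV i j h := by
  obtain ⟨e, he⟩ := e
  induction e using Sym2.ind with
  | _ x y =>
    rcases he with h | h
    · obtain ⟨i, j, hij, rfl, rfl⟩ := exists_eq_Hv1_Hv2_of_ssubset h
      exact ⟨i, j, hij, rfl⟩
    · obtain ⟨i, j, hij, rfl, rfl⟩ := exists_eq_Hv1_Hv2_of_ssubset h
      exact ⟨i, j, hij, Subtype.ext Sym2.eq_swap⟩

theorem edgeV_eq_edgeV_iff {i j i' j' : Fin n} {h : i ≠ j} {h' : i' ≠ j'} :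
    edgeV i j h = edgeV i' j' h' ↔ i = i' ∧ j = j' := by
  refine ⟨fun he => ?_, fun ⟨hi, hj⟩ => by obtain rfl := hi; obtain rfl := hj; rfl⟩
  have he : s(Hv1 i, Hv2 i j h) = s(Hv1 i', Hv2 i' j' h') := congrArg Subtype.val he
  rcases Sym2.eq_iff.mp he with ⟨hi, hij⟩ | ⟨hi, -⟩
  · obtain rfl : i = i' := Finset.singleton_inj.mp (congrArg Subtype.val hi)
    have hij : ({i, j} : Finset (Fin n)) = {i, j'} := congrArg Subtype.val hij
    have hj : j ∈ ({i, j'} : Finset (Fin n)) := hij ▸ mem_insert_of_mem (mem_singleton_self j)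
    simpa [h.symm] using hj
  · simpa [Hv1, Hv2, Finset.card_pair h'] using congrArg (fun v : HV n => v.1.card) hi

theorem permEdge_edgeV (α : Equiv.Perm (Fin n)) {i j : Fin n} (h : i ≠ j) :
    permEdge α (edgeV i j h) = edgeV (α i) (α j) (α.injective.ne h) := by
  have h1 : permHom α (Hv1 i) = Hv1 (α i) := Subtype.ext (Finset.image_singleton _ _)
  have h2 : permHom α (Hv2 i j h) = Hv2 (α i) (α j) (α.injective.ne h) :=
    Subtype.ext (by simp [permHom, permMap, Hv2, Finset.image_insert])
  exact Subtype.ext (by simp [permEdge, edgeV, h1, h2])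

def edgesWith (P : Fin n → Fin n → Prop) : Set (Hgraph n).edgeSet :=
  {e | ∃ i j h, P i j ∧ e = edgeV i j h}

theorem edgeV_mem_edgesWith {P : Fin n → Fin n → Prop} {i j : Fin n} (h : i ≠ j) :
    edgeV i j h ∈ edgesWith P ↔ P i j := by
  refine ⟨?_, fun hP => ⟨i, j, h, hP, rfl⟩⟩
  rintro ⟨i', j', h', hP, he⟩
  obtain ⟨rfl, rfl⟩ := edgeV_eq_edgeV_iff.mp he
  exact hP

theorem edgesWith_union (P Q : Fin n → Fin n → Prop) :
    edgesWith P ∪ edgesWith Q = edgesWith fun i j => P i j ∨ Q i j := by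
  ext e
  obtain ⟨i, j, h, rfl⟩ := exists_eq_edgeV e
  simp only [Set.mem_union, edgeV_mem_edgesWith]

theorem edgesWith_inter (P Q : Fin n → Fin n → Prop) :
    edgesWith P ∩ edgesWith Q = edgesWith fun i j => P i j ∧ Q i j := by
  ext e
  obtain ⟨i, j, h, rfl⟩ := exists_eq_edgeV e
  simp only [Set.mem_inter_iff, edgeV_mem_edgesWith]

theorem edgesWith_eq_univ {P : Fin n → Fin n → Prop} (hP : ∀ i j, i ≠ j → P i j) :
    edgesWith P = Set.univ :=
  Set.eq_univ_of_forall fun e => by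
    obtain ⟨i, j, h, rfl⟩ := exists_eq_edgeV e
    exact (edgeV_mem_edgesWith h).mpr (hP i j h)

theorem edgesWith_eq_empty {P : Fin n → Fin n → Prop} (hP : ∀ i j, i ≠ j → ¬ P i j) :
    edgesWith P = ∅ :=
  Set.eq_empty_of_forall_notMem fun _ ⟨i, j, h, hPij, _⟩ => hP i j h hPij

/-- The vertices `[i, ij]` of `L(n)` for which `i = x` holds iff `p` does and `j = x` iff `q`. -/
def patternEdges (x : Fin n) (p q : Prop) : Set (Hgraph n).edgeSet :=
  edgesWith fun i j => (i = x ↔ p) ∧ (j = x ↔ q)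

theorem permEdge_mem_patternEdges {x : Fin n} {p q : Prop} {α : Equiv.Perm (Fin n)}
    (hα : α x = x) {e : (Hgraph n).edgeSet} (he : e ∈ patternEdges x p q) :
    permEdge α e ∈ patternEdges x p q := by
  obtain ⟨i, j, h, hij, rfl⟩ := he
  rw [patternEdges, permEdge_edgeV, edgeV_mem_edgesWith]
  simpa only [α.apply_eq_iff_eq_of_apply_eq hα] using hij

theorem exists_permEdge_eq_of_mem_patternEdges {x : Fin n} {p q : Prop}
    {e e' : (Hgraph n).edgeSet} (he : e ∈ patternEdges x p q) (he' : e' ∈ patternEdges x p q) :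
    ∃ α : Equiv.Perm (Fin n), α x = x ∧ permEdge α e = e' := by
  obtain ⟨i, j, h, ⟨hi, hj⟩, rfl⟩ := he
  obtain ⟨i', j', h', ⟨hi', hj'⟩, rfl⟩ := he'
  obtain ⟨α, hαx, hαi, hαj⟩ :=
    Equiv.Perm.exists_fixing_apply_eq_apply_eq h h' (hi.trans hi'.symm) (hj.trans hj'.symm)
  exact ⟨α, hαx, by rw [permEdge_edgeV, edgeV_eq_edgeV_iff]; exact ⟨hαi, hαj⟩⟩

end

theorem stabilizer_three_orbits_general (n : ℕ) (x1 : Fin n)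
    (O₁ O₂ O₃ : Set ((Hgraph n).edgeSet))
    (hO₁ : O₁ = {e | ∃ i, ∃ hi : x1 ≠ i, e = edgeV x1 i hi})
    (hO₂ : O₂ = {e | ∃ i, ∃ hi : i ≠ x1, e = edgeV i x1 hi})
    (hO₃ : O₃ = {e | ∃ i j, i ≠ x1 ∧ j ≠ x1 ∧ ∃ hij : i ≠ j, e = edgeV i j hij}) :
    (O₁ ∪ O₂ ∪ O₃ = Set.univ) ∧
    (O₁ ∩ O₂ = ∅ ∧ O₁ ∩ O₃ = ∅ ∧ O₂ ∩ O₃ = ∅) ∧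
    (∀ O ∈ ({O₁, O₂, O₃} : Set (Set ((Hgraph n).edgeSet))),
      (∀ α : Equiv.Perm (Fin n), α x1 = x1 → ∀ e ∈ O, permEdge α e ∈ O) ∧
      (∀ e ∈ O, ∀ e' ∈ O, ∃ α : Equiv.Perm (Fin n), α x1 = x1 ∧ permEdge α e = e')) := by
  have h₁ : O₁ = patternEdges x1 True False := by
    ext e; obtain ⟨i, j, h, rfl⟩ := exists_eq_edgeV e
    simp [hO₁, patternEdges, edgeV_mem_edgesWith, edgeV_eq_edgeV_iff, ne_comm]
  have h₂ : O₂ = patternEdges x1 False True := by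
    ext e; obtain ⟨i, j, h, rfl⟩ := exists_eq_edgeV e
    simp [hO₂, patternEdges, edgeV_mem_edgesWith, edgeV_eq_edgeV_iff]
  have h₃ : O₃ = patternEdges x1 False False := by
    ext e; obtain ⟨i, j, h, rfl⟩ := exists_eq_edgeV e
    simp [hO₃, patternEdges, edgeV_mem_edgesWith, edgeV_eq_edgeV_iff, h]
  subst h₁ h₂ h₃
  refine ⟨?_, ?_, ?_⟩
  · unfold patternEdges
    rw [edgesWith_union, edgesWith_union]
    exact edgesWith_eq_univ (by grind)
  · unfold patternEdges
    simp only [edgesWith_inter]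
    exact ⟨edgesWith_eq_empty (by grind), edgesWith_eq_empty (by grind),
      edgesWith_eq_empty (by grind)⟩
  · rintro O (rfl | rfl | rfl) <;>
      exact ⟨fun α hα e he => permEdge_mem_patternEdges hα he,
        fun e he e' he' => exists_permEdge_eq_of_mem_patternEdges he he'⟩

/-- The subgroup of automorphisms of `L(n)` induced by permutations fixing `x1` has exactly
three orbits: `O₁ = {[x1, x1 i]}`, `O₂ = {[i, x1 i]}`, `O₃ = {[i,ij] : i, j ≠ x1}`.
Each of the three sets is invariant and the induced action is transitive on each of them,
and they partition the vertex set. -/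
theorem stabilizer_three_orbits (n : ℕ) (hn : 4 ≤ n) (x1 : Fin n)
    (O₁ O₂ O₃ : Set ((Hgraph n).edgeSet))
    (hO₁ : O₁ = {e | ∃ i, ∃ hi : x1 ≠ i, e = edgeV x1 i hi})
    (hO₂ : O₂ = {e | ∃ i, ∃ hi : i ≠ x1, e = edgeV i x1 hi})
    (hO₃ : O₃ = {e | ∃ i j, i ≠ x1 ∧ j ≠ x1 ∧ ∃ hij : i ≠ j, e = edgeV i j hij}) :
    (O₁ ∪ O₂ ∪ O₃ = Set.univ) ∧
    (O₁ ∩ O₂ = ∅ ∧ O₁ ∩ O₃ = ∅ ∧ O₂ ∩ O₃ = ∅) ∧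
    (∀ O ∈ ({O₁, O₂, O₃} : Set (Set ((Hgraph n).edgeSet))),
      (∀ α : Equiv.Perm (Fin n), α x1 = x1 → ∀ e ∈ O, permEdge α e ∈ O) ∧
      (∀ e ∈ O, ∀ e' ∈ O, ∃ α : Equiv.Perm (Fin n), α x1 = x1 ∧ permEdge α e = e')) :=
  stabilizer_three_orbits_general n x1 O₁ O₂ O₃ hO₁ hO₂ hO₃
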